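/- Let (Ω, 𝔉, P) be a probability space with a filtration 𝒢_1 ⊆ 𝒢_2 ⊆ ⋯ ⊆ 𝒢_n ⊆ 𝔉, and let ε_1, …, ε_n be {−1,1}-valued random variables such that for each t ∈ {1, …, n}, ε_t is uniformly distributed on {−1,1}, ε_t is independent of 𝒢_t, and ε_t is 𝒢_(t+1)-measurable for t < n. Let S_1, …, S_n be measurable spaces and for each t let s_t be an S_t-valued 𝒢_t-measurable random variable. Let 𝒜 be a finite nonempty set of tuples 𝐚 = (a_1, …, a_n) with each a_t : S_t → ℝ measurable. Then for every λ > 0, E[sup_(𝐚∈𝒜) Σ_(t=1)^n (a_t(s_t)·ε_t − λ·a_t(s_t)²)] ≤ log|𝒜|/(2λ), where the expectation is well-defined in [−∞, ∞) because the integrand is bounded above by n/(4λ). -/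

import Mathlib

/-!
By `1 + y ≤ exp y`, the claim follows from `E[exp (2λ sup_a Z_a)] ≤ |𝒜|`, where `Z_a` is the
offset sum, and the exponential of the supremum is at most `Σ_a exp (2λ Z_a)`. Peeling off one time
step at a time, the new factor `exp (2λ (a ε - λ a²))` averages over the fair sign `ε` to
`cosh (2λ a) exp (-2λ² a²) ≤ 1`, so the partial sums `Σ_a exp (2λ Z_a^{≤t})` have expectation at
most `|𝒜|`. The last sign is not assumed measurable, so instead of conditional expectations the
averaging step is done by hand: if `K ≤ M + e R` with `M`, `R` measurable for a σ-algebra `𝒢` and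
`e` a fair sign independent of `𝒢`, then `∫ K ≤ ∫ M`.
-/

open MeasureTheory ProbabilityTheory Real

section HalfMeasure

variable {Ω : Type*} {𝒢 m0 : MeasurableSpace Ω} {μ : Measure Ω}
  {E D : Set Ω}

lemma measure_inter_le_half_of_ae_subset
    (hE : ∀ C, MeasurableSet[𝒢] C → μ (E ∩ C) = μ C / 2) (hDE : μ (D \ E) = 0)
    {C : Set Ω} (hC : MeasurableSet[𝒢] C) : μ (D ∩ C) ≤ μ C / 2 := by
  rw [← hE C hC, ← measure_sdiff_null hDE]
  exact measure_mono fun ω ⟨⟨hωD, hωC⟩, hωDE⟩ => ⟨by_contra fun hωE => hωDE ⟨hωD, hωE⟩, hωC⟩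

lemma measure_inter_le_half_of_ae_disjoint [IsFiniteMeasure μ] (hD : MeasurableSet D)
    (hE : ∀ C, MeasurableSet[𝒢] C → μ (E ∩ C) = μ C / 2) (hDE : μ (D ∩ E) = 0)
    {C : Set Ω} (hC : MeasurableSet[𝒢] C) : μ (D ∩ C) ≤ μ C / 2 := by
  have hhalf : μ C / 2 ≤ μ (C \ D) := by
    rw [← hE C hC, ← measure_sdiff_null hDE]
    exact measure_mono fun ω ⟨⟨hωE, hωC⟩, hωDE⟩ => ⟨hωC, fun hωD => hωDE ⟨hωD, hωE⟩⟩
  calc μ (D ∩ C) ≤ μ C - μ C / 2 := by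
        refine ENNReal.le_sub_of_add_le_right (by finiteness) ?_
        calc μ (D ∩ C) + μ C / 2 ≤ μ (C ∩ D) + μ (C \ D) := by rw [Set.inter_comm]; gcongr
          _ = μ C := measure_inter_add_sdiff C hD
    _ = μ C / 2 := ENNReal.sub_half (measure_ne_top μ C)

lemma setIntegral_le_half_integral (h𝒢 : 𝒢 ≤ m0)
    (hD : ∀ C, MeasurableSet[𝒢] C → μ (D ∩ C) ≤ μ C / 2) {f : Ω → ℝ}
    (hfm : Measurable[𝒢] f) (hf : Integrable f μ) (hf0 : 0 ≤ f) :
    ∫ ω in D, f ω ∂μ ≤ (∫ ω, f ω ∂μ) / 2 := by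
  have hle : (μ.restrict D).trim h𝒢 ≤ ((2 : ENNReal)⁻¹ • μ).trim h𝒢 := by
    refine Measure.le_iff.2 fun C hC => ?_
    rw [trim_measurableSet_eq h𝒢 hC, trim_measurableSet_eq h𝒢 hC,
      Measure.restrict_apply (h𝒢 _ hC), Set.inter_comm, Measure.smul_apply, smul_eq_mul,
      ← ENNReal.div_eq_inv_mul]
    exact hD C hC
  have hfs := hfm.stronglyMeasurable
  calc ∫ ω in D, f ω ∂μ = ∫ ω, f ω ∂(μ.restrict D).trim h𝒢 := integral_trim h𝒢 hfs
    _ ≤ ∫ ω, f ω ∂((2 : ENNReal)⁻¹ • μ).trim h𝒢 :=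
      integral_mono_measure hle (Filter.Eventually.of_forall hf0)
        ((hf.smul_measure (by simp)).trim h𝒢 hfs)
    _ = (∫ ω, f ω ∂μ) / 2 := by
      rw [← integral_trim h𝒢 hfs, integral_smul_measure]
      simp [div_eq_inv_mul]

lemma measure_inter_eq_half_of_indep {e : Ω → ℝ}
    (hind : Indep (MeasurableSpace.comap e inferInstance) 𝒢 μ)
    (hunif : μ {ω | e ω = 1} = 1 / 2) {C : Set Ω} (hC : MeasurableSet[𝒢] C) :
    μ ({ω | e ω = 1} ∩ C) = μ C / 2 := by
  have h := (Indep_iff _ _ μ).1 hind (e ⁻¹' {1}) C ⟨{1}, measurableSet_singleton 1, rfl⟩ hC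
  change μ ({ω | e ω = 1} ∩ C) = μ {ω | e ω = 1} * μ C at h
  rwa [hunif, one_div, ← ENNReal.div_eq_inv_mul] at h

lemma integral_le_setIntegral_posPart_add_negPart {K f R : Ω → ℝ}
    (hK : Integrable K μ) (hKf : K =ᵐ[μ] f) (hfm : Measurable f) (hR : Integrable R μ)
    (hRm : Measurable R) (hKR : ∀ ω, K ω ≤ |R ω|) :
    ∫ ω, K ω ∂μ ≤ 2 * (∫ ω in {ω | -|R ω| < f ω ∧ 0 < R ω}, max (R ω) 0 ∂μ
      + ∫ ω in {ω | -|R ω| < f ω ∧ R ω < 0}, max (-R ω) 0 ∂μ) - ∫ ω, |R ω| ∂μ := by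
  set Dp := {ω | -|R ω| < f ω ∧ 0 < R ω}
  set Dn := {ω | -|R ω| < f ω ∧ R ω < 0}
  have hDp : MeasurableSet Dp :=
    (measurableSet_lt hRm.abs.neg hfm).inter (measurableSet_lt measurable_const hRm)
  have hDn : MeasurableSet Dn :=
    (measurableSet_lt hRm.abs.neg hfm).inter (measurableSet_lt hRm measurable_const)
  have hIp := hR.pos_part.indicator hDp
  have hIn := hR.neg_part.indicator hDn
  have hbound : ∀ᵐ ω ∂μ, K ω ≤
      2 * (Dp.indicator (fun ω => max (R ω) 0) ω + Dn.indicator (fun ω => max (-R ω) 0) ω)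
        - |R ω| := by
    filter_upwards [hKf] with ω hKω
    by_cases hlt : -|R ω| < f ω
    · rcases lt_trichotomy (R ω) 0 with hR | hR | hR
      · have hlt' : R ω < f ω := by rwa [abs_of_neg hR, neg_neg] at hlt
        simp [Dp, Dn, Set.indicator, hlt', hR, hR.not_gt, abs_of_neg hR, hR.le]
        linarith [abs_of_neg hR, hKR ω]
      · simpa [Dp, Dn, Set.indicator, hR] using hKR ω
      · have hlt' : -R ω < f ω := by rwa [abs_of_pos hR] at hlt
        simp [Dp, Dn, Set.indicator, hlt', hR, hR.not_gt, abs_of_pos hR, hR.le]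
        linarith [abs_of_pos hR, hKR ω]
    · simp [Dp, Dn, Set.indicator, hlt]
      linarith
  calc ∫ ω, K ω ∂μ
      ≤ ∫ ω, (2 * (Dp.indicator (fun ω => max (R ω) 0) ω
          + Dn.indicator (fun ω => max (-R ω) 0) ω) - |R ω|) ∂μ :=
        integral_mono_ae hK (((hIp.add hIn).const_mul 2).sub hR.abs) hbound
    _ = 2 * (∫ ω in Dp, max (R ω) 0 ∂μ + ∫ ω in Dn, max (-R ω) 0 ∂μ) - ∫ ω, |R ω| ∂μ := by
        rw [integral_sub (by exact (hIp.add hIn).const_mul 2) hR.abs, integral_const_mul,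
          integral_add hIp hIn, integral_indicator hDp, integral_indicator hDn]

/-- The sign `e` need not be measurable: where a measurable version of `K` exceeds `-|R|`,
the bound `K ≤ e * R` pins down `e`, so those sets lie a.e. inside `{e = 1}` or its complement. -/
lemma integral_le_zero_of_le_sign_mul [IsFiniteMeasure μ] (h𝒢 : 𝒢 ≤ m0) {e K R : Ω → ℝ}
    (he : ∀ ω, e ω = 1 ∨ e ω = -1)
    (hE : ∀ C, MeasurableSet[𝒢] C → μ ({ω | e ω = 1} ∩ C) = μ C / 2)
    (hK : Integrable K μ) (hRm : Measurable[𝒢] R) (hR : Integrable R μ)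
    (hKR : ∀ ω, K ω ≤ e ω * R ω) : ∫ ω, K ω ∂μ ≤ 0 := by
  set f := hK.1.mk K
  have hfm : Measurable f := hK.1.stronglyMeasurable_mk.measurable
  have hKf : μ {ω | K ω ≠ f ω} = 0 := ae_iff.1 hK.1.ae_eq_mk
  have hRm0 : Measurable R := hRm.mono h𝒢 le_rfl
  have hDpE : μ ({ω | -|R ω| < f ω ∧ 0 < R ω} \ {ω | e ω = 1}) = 0 := by
    refine measure_mono_null (fun ω ⟨⟨hlt, hpos⟩, hne⟩ => ?_) hKf
    refine fun hKω : K ω = f ω => ?_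
    have := hKR ω
    rcases he ω with h | h
    · exact hne h
    · rw [abs_of_pos hpos] at hlt; rw [h] at this; linarith
  have hDnE : μ ({ω | -|R ω| < f ω ∧ R ω < 0} ∩ {ω | e ω = 1}) = 0 := by
    refine measure_mono_null (fun ω ⟨⟨hlt, hneg⟩, h⟩ => ?_) hKf
    refine fun hKω : K ω = f ω => ?_
    have := hKR ω
    rw [abs_of_neg hneg] at hlt; rw [show e ω = 1 from h] at this; linarith
  have hp := setIntegral_le_half_integral h𝒢
    (fun C hC => measure_inter_le_half_of_ae_subset hE hDpE hC) (hRm.max measurable_const)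
    hR.pos_part fun ω => le_max_right _ _
  have hn := setIntegral_le_half_integral h𝒢 (D := {ω | -|R ω| < f ω ∧ R ω < 0})
    (fun C hC => measure_inter_le_half_of_ae_disjoint
      ((measurableSet_lt hRm0.abs.neg hfm).inter (measurableSet_lt hRm0 measurable_const))
      hE hDnE hC)
    (f := fun ω => max (-R ω) 0) (hRm.neg.max measurable_const) hR.neg_part
    fun ω => le_max_right _ _
  have habs : ∫ ω, |R ω| ∂μ = ∫ ω, max (R ω) 0 ∂μ + ∫ ω, max (-R ω) 0 ∂μ := by
    rw [← integral_add hR.pos_part hR.neg_part]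
    congr 1 with ω
    rcases le_total 0 (R ω) with h | h <;> simp [h, abs_of_nonneg, abs_of_nonpos]
  have hKabs (ω : Ω) : K ω ≤ |R ω| := (hKR ω).trans <| by
    rcases he ω with h | h <;> rw [h] <;> simp [le_abs_self, neg_le_abs]
  have := integral_le_setIntegral_posPart_add_negPart hK hK.1.ae_eq_mk hfm hR hRm0 hKabs
  linarith

end HalfMeasure

lemma exp_mul_sign {c e : ℝ} (he : e = 1 ∨ e = -1) : exp (c * e) = cosh c + e * sinh c := by
  rcases he with rfl | rfl <;> simp [cosh_eq, sinh_eq] <;> ring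

lemma abs_sinh_le_cosh (y : ℝ) : |sinh y| ≤ cosh y :=
  abs_sinh y ▸ cosh_abs y ▸ (sinh_lt_cosh |y|).le

lemma cosh_mul_exp_neg_le_one (y : ℝ) : cosh y * exp (-(y ^ 2 / 2)) ≤ 1 := by
  calc cosh y * exp (-(y ^ 2 / 2)) ≤ exp (y ^ 2 / 2) * exp (-(y ^ 2 / 2)) := by
        gcongr; exact cosh_le_exp_half_sq y
    _ = 1 := by rw [← exp_add, add_neg_cancel, exp_zero]

lemma mul_sign_sub_mul_sq_le {lam y e : ℝ} (hlam : 0 < lam) (he : e = 1 ∨ e = -1) :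
    y * e - lam * y ^ 2 ≤ 1 / (4 * lam) := by
  rw [le_div_iff₀ (by positivity)]
  rcases he with rfl | rfl <;> nlinarith [sq_nonneg (2 * lam * y - 1), sq_nonneg (2 * lam * y + 1)]

section OffsetProcess

variable {Ω α : Type*} {n : ℕ} (x : α → Fin n → Ω → ℝ) (ε : Fin n → Ω → ℝ) (lam : ℝ)
  (A : Finset α)

def offsetSum (a : α) (k : ℕ) (ω : Ω) : ℝ :=
  ∑ t : Fin n with t.val < k, (x a t ω * ε t ω - lam * x a t ω ^ 2)

noncomputable def expWeight (k : ℕ) (ω : Ω) : ℝ :=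
  ∑ a ∈ A, exp (2 * lam * offsetSum x ε lam a k ω)

/-- `expWeight (t + 1) = stepWeight cosh t + ε t * stepWeight sinh t`: the cosh part is what
survives averaging over the sign `ε t`. -/
noncomputable def stepWeight (h : ℝ → ℝ) (t : Fin n) (ω : Ω) : ℝ :=
  ∑ a ∈ A, exp (2 * lam * offsetSum x ε lam a t ω - 2 * lam ^ 2 * x a t ω ^ 2) *
    h (2 * lam * x a t ω)

variable {x ε lam A}

lemma offsetSum_zero (a : α) (ω : Ω) : offsetSum x ε lam a 0 ω = 0 := by
  simp [offsetSum]

lemma offsetSum_self (a : α) (ω : Ω) :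
    offsetSum x ε lam a n ω = ∑ t, (x a t ω * ε t ω - lam * x a t ω ^ 2) := by
  simp [offsetSum]

lemma offsetSum_succ (a : α) (t : Fin n) (ω : Ω) :
    offsetSum x ε lam a (t + 1) ω =
      offsetSum x ε lam a t ω + (x a t ω * ε t ω - lam * x a t ω ^ 2) := by
  have hfilter : Finset.univ.filter (fun s : Fin n => s.val < t + 1) =
      insert t (Finset.univ.filter (fun s : Fin n => s.val < t)) := by
    ext s
    simp [Fin.ext_iff]
    omega
  rw [offsetSum, hfilter, Finset.sum_insert (by simp), add_comm]
  rfl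

lemma offsetSum_le (hlam : 0 < lam) (hε : ∀ t ω, ε t ω = 1 ∨ ε t ω = -1) (a : α) (k : ℕ)
    (ω : Ω) : offsetSum x ε lam a k ω ≤ n / (4 * lam) := by
  calc offsetSum x ε lam a k ω ≤ ∑ _t : Fin n with _t.val < k, 1 / (4 * lam) :=
        Finset.sum_le_sum fun t _ => mul_sign_sub_mul_sq_le hlam (hε t ω)
    _ ≤ ∑ _t : Fin n, 1 / (4 * lam) :=
        Finset.sum_le_sum_of_subset_of_nonneg (Finset.filter_subset _ _)
          fun _ _ _ => by positivity
    _ = n / (4 * lam) := by simp [div_eq_mul_inv]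

lemma expWeight_le (hlam : 0 < lam) (hε : ∀ t ω, ε t ω = 1 ∨ ε t ω = -1) (k : ℕ) (ω : Ω) :
    expWeight x ε lam A k ω ≤ A.card * exp (n / 2) := by
  calc expWeight x ε lam A k ω ≤ ∑ _a ∈ A, exp (n / 2) := by
        refine Finset.sum_le_sum fun a _ => exp_le_exp.2 ?_
        calc 2 * lam * offsetSum x ε lam a k ω ≤ 2 * lam * (n / (4 * lam)) := by
              gcongr; exact offsetSum_le hlam hε a k ω
          _ = n / 2 := by field_simp; ring
    _ = A.card * exp (n / 2) := by simp

lemma expWeight_succ (t : Fin n) (ω : Ω) (he : ε t ω = 1 ∨ ε t ω = -1) :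
    expWeight x ε lam A (t + 1) ω =
      stepWeight x ε lam A cosh t ω + ε t ω * stepWeight x ε lam A sinh t ω := by
  simp only [expWeight, stepWeight, Finset.mul_sum, ← Finset.sum_add_distrib, offsetSum_succ]
  refine Finset.sum_congr rfl fun a _ => ?_
  rw [show 2 * lam * (offsetSum x ε lam a t ω + (x a t ω * ε t ω - lam * x a t ω ^ 2)) =
      (2 * lam * offsetSum x ε lam a t ω - 2 * lam ^ 2 * x a t ω ^ 2) +
        2 * lam * x a t ω * ε t ω by ring, exp_add, exp_mul_sign he]
  ring

lemma stepWeight_cosh_le (t : Fin n) (ω : Ω) :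
    stepWeight x ε lam A cosh t ω ≤ expWeight x ε lam A t ω := by
  refine Finset.sum_le_sum fun a _ => ?_
  have h := cosh_mul_exp_neg_le_one (2 * lam * x a t ω)
  calc exp (2 * lam * offsetSum x ε lam a t ω - 2 * lam ^ 2 * x a t ω ^ 2) *
        cosh (2 * lam * x a t ω)
      = exp (2 * lam * offsetSum x ε lam a t ω) *
          (cosh (2 * lam * x a t ω) * exp (-((2 * lam * x a t ω) ^ 2 / 2))) := by
        rw [mul_comm (cosh _), ← mul_assoc, ← exp_add]; ring_nf
    _ ≤ exp (2 * lam * offsetSum x ε lam a t ω) := mul_le_of_le_one_right (exp_pos _).le h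

lemma abs_stepWeight_le {h : ℝ → ℝ} (hh : ∀ y, |h y| ≤ cosh y) (t : Fin n) (ω : Ω) :
    |stepWeight x ε lam A h t ω| ≤ stepWeight x ε lam A cosh t ω := by
  refine (Finset.abs_sum_le_sum_abs _ _).trans (Finset.sum_le_sum fun a _ => ?_)
  rw [abs_mul, abs_of_pos (exp_pos _)]
  gcongr
  exact hh _

end OffsetProcess

section OffsetProcessIntegral

variable {Ω α : Type*} {m0 : MeasurableSpace Ω} {μ : Measure Ω} {n : ℕ}
  {x : α → Fin n → Ω → ℝ} {ε : Fin n → Ω → ℝ} {lam : ℝ} {A : Finset α}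
  {G : Fin n → MeasurableSpace Ω}

lemma measurable_offsetSum (hG : Monotone G)
    (hεmeas : ∀ (t : Fin n) (ht : t.val + 1 < n), Measurable[G ⟨t.val + 1, ht⟩] (ε t))
    {a : α} (hx : ∀ t, Measurable[G t] (x a t)) (t : Fin n) :
    Measurable[G t] (offsetSum x ε lam a t) := by
  refine Finset.measurable_sum _ fun s hs => ?_
  have hst : s.val < t := (Finset.mem_filter.1 hs).2
  have hεs : Measurable[G t] (ε s) :=
    (hεmeas s (by omega)).mono (hG (Fin.mk_le_of_le_val hst)) le_rfl
  have hxs : Measurable[G t] (x a s) := (hx s).mono (hG hst.le) le_rfl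
  exact (hxs.mul hεs).sub ((hxs.pow_const 2).const_mul lam)

lemma measurable_stepWeight (hG : Monotone G)
    (hεmeas : ∀ (t : Fin n) (ht : t.val + 1 < n), Measurable[G ⟨t.val + 1, ht⟩] (ε t))
    (hx : ∀ a ∈ A, ∀ t, Measurable[G t] (x a t)) {h : ℝ → ℝ} (hh : Measurable h)
    (t : Fin n) : Measurable[G t] (stepWeight x ε lam A h t) := by
  refine Finset.measurable_sum _ fun a ha => ?_
  have hxt := hx a ha t
  exact ((((measurable_offsetSum hG hεmeas (hx a ha) t).const_mul (2 * lam)).sub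
    ((hxt.pow_const 2).const_mul _)).exp).mul (hh.comp (hxt.const_mul _))

lemma integral_le_card_of_le_expWeight [IsProbabilityMeasure μ] (hG : Monotone G)
    (hGle : ∀ t, G t ≤ m0) (hεval : ∀ t ω, ε t ω = 1 ∨ ε t ω = -1)
    (hεunif : ∀ t, μ {ω | ε t ω = 1} = 1 / 2)
    (hεindep : ∀ t, Indep (MeasurableSpace.comap (ε t) inferInstance) (G t) μ)
    (hεmeas : ∀ (t : Fin n) (ht : t.val + 1 < n), Measurable[G ⟨t.val + 1, ht⟩] (ε t))
    (hx : ∀ a ∈ A, ∀ t, Measurable[G t] (x a t)) (hlam : 0 < lam) {k : ℕ} (hk : k ≤ n)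
    {K : Ω → ℝ} (hK : Integrable K μ) (hKle : ∀ ω, K ω ≤ expWeight x ε lam A k ω) :
    ∫ ω, K ω ∂μ ≤ A.card := by
  induction k generalizing K with
  | zero =>
    calc ∫ ω, K ω ∂μ ≤ ∫ _, (A.card : ℝ) ∂μ :=
          integral_mono hK (integrable_const _) fun ω =>
            (hKle ω).trans_eq (by simp [expWeight, offsetSum_zero])
      _ = A.card := by simp
  | succ k ih =>
    set t : Fin n := ⟨k, hk⟩
    have hint {h : ℝ → ℝ} (hhm : Measurable h) (hh : ∀ y, |h y| ≤ cosh y) :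
        Integrable (stepWeight x ε lam A h t) μ :=
      Integrable.of_bound
        ((measurable_stepWeight hG hεmeas hx hhm t).mono (hGle t) le_rfl).aestronglyMeasurable
        (A.card * exp (n / 2)) <| Filter.Eventually.of_forall fun ω =>
          (Real.norm_eq_abs _).trans_le <| (abs_stepWeight_le hh t ω).trans <|
            (stepWeight_cosh_le t ω).trans (expWeight_le hlam hεval t ω)
    have hM := hint measurable_cosh fun y => (abs_of_pos (cosh_pos y)).le
    have hR := hint measurable_sinh abs_sinh_le_cosh
    have hstep : ∫ ω, (K ω - stepWeight x ε lam A cosh t ω) ∂μ ≤ 0 := by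
      refine integral_le_zero_of_le_sign_mul (hGle t) (hεval t)
        (fun C hC => measure_inter_eq_half_of_indep (hεindep t) (hεunif t) hC) (hK.sub hM)
        (measurable_stepWeight hG hεmeas hx measurable_sinh t) hR fun ω => ?_
      have := expWeight_succ (A := A) (lam := lam) (x := x) t ω (hεval t ω) ▸ hKle ω
      linarith
    have hMle := ih (by omega) hM (stepWeight_cosh_le t)
    rw [integral_sub hK hM] at hstep
    linarith

end OffsetProcessIntegral

section ExponentialMoment

variable {Ω : Type*} {m0 : MeasurableSpace Ω} {μ : Measure Ω}

lemma integrable_exp_mul_of_le [IsFiniteMeasure μ] {f : Ω → ℝ} {c C : ℝ} (hc : 0 ≤ c)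
    (hf : AEStronglyMeasurable f μ) (hfC : ∀ ω, f ω ≤ C) :
    Integrable (fun ω => exp (c * f ω)) μ :=
  Integrable.of_bound (continuous_exp.comp_aestronglyMeasurable (hf.const_mul c)) (exp (c * C))
    (Filter.Eventually.of_forall fun ω => by
      rw [Real.norm_eq_abs, abs_of_pos (exp_pos _)]
      gcongr
      exact hfC ω)

lemma integral_le_log_div_of_integral_exp_le [IsProbabilityMeasure μ] {f : Ω → ℝ} {c N : ℝ}
    (hc : 0 < c) (hN : 0 < N) (hf : Integrable f μ)
    (hexp : Integrable (fun ω => exp (c * f ω)) μ) (h : ∫ ω, exp (c * f ω) ∂μ ≤ N) :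
    ∫ ω, f ω ∂μ ≤ log N / c := by
  have hpt (ω : Ω) : c * f ω - log N ≤ exp (c * f ω) / N - 1 := by
    have := add_one_le_exp (c * f ω - log N)
    rw [exp_sub, exp_log hN] at this
    linarith
  have hint := integral_mono (f := fun ω => c * f ω - log N)
    (g := fun ω => exp (c * f ω) / N - 1) ((hf.const_mul c).sub (integrable_const _))
    ((hexp.div_const N).sub (integrable_const 1)) hpt
  rw [integral_sub (hf.const_mul c) (integrable_const _),
    integral_sub (hexp.div_const N) (integrable_const _), integral_const_mul, integral_div] at hint
  simp only [integral_const, probReal_univ, one_smul] at hint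
  have : (∫ ω, exp (c * f ω) ∂μ) / N ≤ 1 := div_le_one_of_le₀ h hN.le
  rw [le_div_iff₀ hc, mul_comm]
  linarith

lemma exp_mul_sup'_le_sum_exp {ι : Type*} {s : Finset ι} (hs : s.Nonempty) (f : ι → ℝ)
    (c : ℝ) : exp (c * s.sup' hs f) ≤ ∑ i ∈ s, exp (c * f i) := by
  obtain ⟨i, hi, hfi⟩ := s.exists_mem_eq_sup' hs f
  rw [hfi]
  exact Finset.single_le_sum (f := fun j => exp (c * f j)) (fun j _ => (exp_pos _).le) hi

end ExponentialMoment

theorem stmt12 {Ω : Type*} [m0 : MeasurableSpace Ω] (μ : Measure Ω) [IsProbabilityMeasure μ]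
    {n : ℕ} (G : Fin n → MeasurableSpace Ω)
    (hGmono : ∀ s t : Fin n, s ≤ t → G s ≤ G t) (hGle : ∀ t, G t ≤ m0)
    (ε : Fin n → Ω → ℝ)
    (hεval : ∀ t ω, ε t ω = 1 ∨ ε t ω = -1)
    (hεunif : ∀ t, μ {ω | ε t ω = 1} = 1 / 2)
    (hεindep : ∀ t, Indep (MeasurableSpace.comap (ε t) (inferInstance : MeasurableSpace ℝ))
      (G t) μ)
    (hεmeas : ∀ (t : Fin n) (ht : t.val + 1 < n), Measurable[G ⟨t.val + 1, ht⟩] (ε t))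
    (S : Fin n → Type*) [∀ t, MeasurableSpace (S t)]
    (s : (t : Fin n) → Ω → S t) (hs : ∀ t, Measurable[G t] (s t))
    (A : Finset ((t : Fin n) → S t → ℝ)) (hA : A.Nonempty)
    (hAmeas : ∀ a ∈ A, ∀ t, Measurable (a t))
    (lam : ℝ) (hlam : 0 < lam) :
    ∫ ω, A.sup' hA (fun a => ∑ t, (a t (s t ω) * ε t ω - lam * (a t (s t ω)) ^ 2)) ∂μ ≤
      Real.log A.card / (2 * lam) := by
  set x : ((t : Fin n) → S t → ℝ) → Fin n → Ω → ℝ := fun a t ω => a t (s t ω)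
  set g := fun ω => A.sup' hA fun a => offsetSum x ε lam a n ω
  have hg_eq : (fun ω => A.sup' hA
      fun a => ∑ t, (a t (s t ω) * ε t ω - lam * (a t (s t ω)) ^ 2)) = g := by
    simp only [g, x, offsetSum_self]
  rw [hg_eq]
  by_cases hg : Integrable g μ
  swap
  · rw [integral_undef hg]
    positivity
  have hgle (ω : Ω) : g ω ≤ n / (4 * lam) := Finset.sup'_le hA _ fun a _ =>
    offsetSum_le hlam hεval a n ω
  have hexp := integrable_exp_mul_of_le (by positivity : 0 ≤ 2 * lam) hg.1 hgle
  refine integral_le_log_div_of_integral_exp_le (by positivity) (by simpa using hA.card_pos) hg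
    hexp (integral_le_card_of_le_expWeight (x := x) (fun _ _ => hGmono _ _) hGle hεval hεunif
      hεindep hεmeas (fun a ha t => (hAmeas a ha t).comp (hs t)) hlam le_rfl hexp fun ω => ?_)
  exact exp_mul_sup'_le_sum_exp hA _ _
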